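/- (Inductive step of Proposition 4.3) Suppose τ_μ = σ_μ for all μ ∈ Λ with |μ| ≤ s, where s ≥ 2n, and suppose Condition (**) holds. Then for every λ ∈ Λ with |λ| = s+1, in the expansion τ_λ = σ_λ + Σ_{|μ|+2n=|λ|} a_μ q σ_μ, all a_μ ≥ 0; combined with the bound that each a_μ ≤ 0 or pairs sum to ≤ 0, all a_μ = 0, so τ_λ = σ_λ. -/

import Mathlib

open Polynomial
set_option linter.unusedSectionVars false
set_option linter.unusedVariables false
set_option maxHeartbeats 1000000

def Lam (n : ℤ) : Set (ℤ × ℤ) :=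
  {p | p.1 ≤ 2*n - 1 ∧ p.2 ≤ p.1 ∧ -1 ≤ p.2 ∧
       (n - 2 < p.1 → p.2 < p.1) ∧ (p.2 = -1 → p.1 = 2*n - 1)}

abbrev M := (ℤ × ℤ) →₀ Polynomial ℚ

noncomputable def tau (l : ℤ × ℤ) : M := Finsupp.single l 1

/-- Pech's quantum Pieri rule for multiplication by τ_(1,1), on basis indices. -/
noncomputable def pieriFun (n : ℤ) : ℤ × ℤ → M := fun p =>
  if p.1 = 2*n - 1 then
    (if p.2 = 2*n - 3 then (X : Polynomial ℚ) • (tau (2*n-1, -1) + tau (2*n-2, 0))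
     else (X : Polynomial ℚ) • tau (p.2 + 1, 0))
  else if p.1 + p.2 = 2*n - 4 ∨ p.1 + p.2 = 2*n - 3 then
    tau (p.1 + 2, p.2) + tau (p.1 + 1, p.2 + 1)
  else tau (p.1 + 1, p.2 + 1)

/-- The Pieri operator: quantum multiplication by τ_(1,1). -/
noncomputable def P (n : ℤ) : M →ₗ[Polynomial ℚ] M :=
  Finsupp.linearCombination (Polynomial ℚ) (pieriFun n)

/-- Λ as a finite set. -/
noncomputable def LamF (n : ℤ) : Finset (ℤ × ℤ) :=
  ((Finset.Icc (-1) (2*n-1)) ×ˢ (Finset.Icc (-1) (2*n-1))).filter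
    (fun p => p.2 ≤ p.1 ∧ (n - 2 < p.1 → p.2 < p.1) ∧ (p.2 = -1 → p.1 = 2*n - 1))

lemma mem_LamF {n : ℤ} {p : ℤ × ℤ} : p ∈ LamF n ↔ (-1 ≤ p.1 ∧ p.1 ≤ 2*n-1) ∧ (-1 ≤ p.2 ∧ p.2 ≤ 2*n-1) ∧ p.2 ≤ p.1 ∧ (n-2 < p.1 → p.2 < p.1) ∧ (p.2 = -1 → p.1 = 2*n-1) := by
  unfold LamF
  simp [Finset.mem_filter, Finset.mem_product, Finset.mem_Icc]
  tauto
lemma tau_apply (l p : ℤ × ℤ) : tau l p = if l = p then 1 else 0 := Finsupp.single_apply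
lemma P_tau (n : ℤ) (p : ℤ × ℤ) : P n (tau p) = pieriFun n p := by
  simp [P, tau, Finsupp.linearCombination_single]
lemma fst_eq {u v : ℤ × ℤ} (e : u = v) : u.1 = v.1 := by rw [e]
lemma snd_eq {u v : ℤ × ℤ} (e : u = v) : u.2 = v.2 := by rw [e]
lemma degF {n : ℤ} (hn : 3 ≤ n) : ∀ p ∈ LamF n, p.1 + p.2 ≤ 4*n-3 := by
  intro p hp; rw [mem_LamF] at hp; omega
lemma coeffCXW (r : ℚ) (b1 b2 : Prop) [Decidable b1] [Decidable b2] :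
    ((C r * X) * ((if b1 then (1:Polynomial ℚ) else 0) + (if b2 then 1 else 0))).coeff 1
    = r * ((if b1 then (1:ℚ) else 0) + (if b2 then 1 else 0)) := by
  split_ifs <;> ring_nf <;> simp

lemma pevalS {n : ℤ} (hn : 3 ≤ n) (μ : ℤ × ℤ) (hμ : μ ∈ LamF n) (hd : μ.1 + μ.2 ≤ 2*n-3)
    (q : ℤ × ℤ) : (pieriFun n μ) q =
    (if (μ.1+1, μ.2+1) = q then 1 else 0) +
    (if ((μ.1+μ.2 = 2*n-4 ∨ μ.1+μ.2 = 2*n-3) ∧ (μ.1+2, μ.2) = q) then 1 else 0) := by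
  rw [mem_LamF] at hμ
  have h1 : μ.1 ≠ 2*n-1 := by omega
  unfold pieriFun
  rw [if_neg h1]
  by_cases hmid : μ.1 + μ.2 = 2*n-4 ∨ μ.1 + μ.2 = 2*n-3
  · rw [if_pos hmid, Finsupp.add_apply, tau_apply, tau_apply]
    have : (if ((μ.1+μ.2 = 2*n-4 ∨ μ.1+μ.2 = 2*n-3) ∧ (μ.1+2, μ.2) = q) then (1:Polynomial ℚ) else 0)
        = if (μ.1+2, μ.2) = q then 1 else 0 := by
      by_cases h2 : (μ.1+2, μ.2) = q
      · rw [if_pos ⟨hmid, h2⟩, if_pos h2]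
      · rw [if_neg (fun hh => h2 hh.2), if_neg h2]
    rw [this, add_comm]
  · rw [if_neg hmid, tau_apply]
    have hno : ¬((μ.1+μ.2 = 2*n-4 ∨ μ.1+μ.2 = 2*n-3) ∧ (μ.1+2, μ.2) = q) := fun hh => hmid hh.1
    rw [if_neg hno, add_zero]

lemma pevalTop0 {n : ℤ} (hn : 3 ≤ n) (l : ℤ × ℤ) (hl : l ∈ LamF n) (hd : 2*n+1 ≤ l.1 + l.2)
    (q : ℤ × ℤ) (hq2 : 1 ≤ q.2) (hqd : q.1 + q.2 < l.1 + l.2 + 2) : (pieriFun n l) q = 0 := by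
  rw [mem_LamF] at hl
  unfold pieriFun
  by_cases h1 : l.1 = 2*n-1
  · rw [if_pos h1]
    by_cases h2 : l.2 = 2*n-3
    · rw [if_pos h2, Finsupp.smul_apply, Finsupp.add_apply, tau_apply, tau_apply]
      rw [if_neg (fun e => by have := snd_eq e; simp at this; omega)]
      rw [if_neg (fun e => by have := snd_eq e; simp at this; omega)]
      simp
    · rw [if_neg h2, Finsupp.smul_apply, tau_apply]
      rw [if_neg (fun e => by have := snd_eq e; simp at this; omega)]
      simp
  · rw [if_neg h1, if_neg (by omega), tau_apply]
    rw [if_neg (fun e => by have e1 := fst_eq e; have e2 := snd_eq e; simp at e1 e2; omega)]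

section
variable {n : ℤ} (hn : 3 ≤ n) (σ : ℤ × ℤ → M) (a : ℤ × ℤ → ℤ × ℤ → ℚ)
    (h : ∀ l ∈ LamF n, tau l = σ l +
      ∑ μ ∈ (LamF n).filter (fun μ => μ.1 + μ.2 + 2*n = l.1 + l.2),
        (Polynomial.C (a μ l) * X) • σ μ)
    (c : ℤ × ℤ → ℤ × ℤ → Polynomial ℚ)
    (hc : ∀ μ ∈ LamF n, P n (σ μ) = ∑ ν ∈ LamF n, (c μ ν) • σ ν)
    (hpos : ∀ μ ∈ LamF n, ∀ ν ∈ LamF n, ∀ k : ℕ, 0 ≤ (c μ ν).coeff k)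
    (s : ℤ) (hs : 2*n ≤ s)
    (ih : ∀ μ ∈ LamF n, μ.1 + μ.2 ≤ s → tau μ = σ μ)

include hn h hs ih

lemma aSmall : ∀ ρ ∈ LamF n, ρ.1+ρ.2 ≤ s → ∀ q ∈ LamF n, q.1+q.2+2*n = ρ.1+ρ.2 → a q ρ = 0 := by
  intro ρ hρ hdeg q hq hqd
  have hρ' := h ρ hρ
  rw [← ih ρ hρ hdeg] at hρ'
  have hsum : (∑ μ ∈ (LamF n).filter (fun μ => μ.1 + μ.2 + 2*n = ρ.1 + ρ.2),
      (Polynomial.C (a μ ρ) * X) • σ μ) = 0 := by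
    have := hρ'.symm
    rwa [add_eq_left] at this
  have hq' : ∀ μ ∈ (LamF n).filter (fun μ => μ.1 + μ.2 + 2*n = ρ.1 + ρ.2), σ μ = tau μ := by
    intro μ hμ
    rw [Finset.mem_filter] at hμ
    exact (ih μ hμ.1 (by omega)).symm
  rw [Finset.sum_congr rfl (fun μ hμ => by rw [hq' μ hμ])] at hsum
  have happ := DFunLike.congr_fun hsum q
  rw [Finsupp.finset_sum_apply] at happ
  simp only [Finsupp.smul_apply, tau_apply, smul_eq_mul, mul_ite, mul_one, mul_zero] at happ
  rw [Finset.sum_ite_eq' ((LamF n).filter _) q (fun μ => Polynomial.C (a μ ρ) * X)] at happ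
  rw [if_pos (Finset.mem_filter.mpr ⟨hq, hqd⟩)] at happ
  have := congrArg (fun p => Polynomial.coeff p 1) happ
  simpa using this

lemma SIG : ∀ ρ ∈ LamF n, σ ρ = tau ρ -
    ∑ μ ∈ (LamF n).filter (fun μ => μ.1 + μ.2 + 2*n = ρ.1 + ρ.2),
      (Polynomial.C (a μ ρ) * X) • tau μ := by
  intro ρ hρ
  have hd := degF hn ρ hρ
  have hσμ : ∀ μ ∈ (LamF n).filter (fun μ => μ.1 + μ.2 + 2*n = ρ.1 + ρ.2), σ μ = tau μ := by
    intro μ hμ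
    rw [Finset.mem_filter, mem_LamF] at hμ
    refine (ih μ (mem_LamF.mpr hμ.1) ?_).symm
    omega
  by_cases hdeg : ρ.1 + ρ.2 ≤ s
  · have hz : ∀ μ ∈ (LamF n).filter (fun μ => μ.1 + μ.2 + 2*n = ρ.1 + ρ.2),
        (Polynomial.C (a μ ρ) * X) • tau μ = 0 := by
      intro μ hμ
      rw [Finset.mem_filter] at hμ
      rw [aSmall hn σ a h s hs ih ρ hρ hdeg μ hμ.1 hμ.2]
      simp
    rw [Finset.sum_congr rfl hz, Finset.sum_const_zero, sub_zero]
    exact (ih ρ hρ hdeg).symm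
  · have hρ' := h ρ hρ
    rw [Finset.sum_congr rfl (fun μ hμ => by rw [hσμ μ hμ])] at hρ'
    rw [eq_sub_iff_add_eq, ← hρ']

lemma VAL : ∀ ρ ∈ LamF n, ∀ q : ℤ × ℤ, (σ ρ) q =
    (if ρ = q then 1 else 0) -
    (if q ∈ LamF n ∧ q.1+q.2+2*n = ρ.1+ρ.2 then Polynomial.C (a q ρ) * X else 0) := by
  intro ρ hρ q
  rw [SIG hn σ a h s hs ih ρ hρ]
  rw [Finsupp.sub_apply, Finsupp.finset_sum_apply, tau_apply]
  congr 1
  simp only [Finsupp.smul_apply, tau_apply, smul_eq_mul, mul_ite, mul_one, mul_zero]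
  rw [Finset.sum_ite_eq' ((LamF n).filter _) q (fun μ => Polynomial.C (a μ ρ) * X)]
  simp only [Finset.mem_filter]

lemma EVALmem : ∀ (c' : ℤ × ℤ → Polynomial ℚ) (q : ℤ × ℤ), q ∈ LamF n →
    (∑ ρ ∈ LamF n, c' ρ • σ ρ) q = c' q -
      ∑ ρ ∈ (LamF n).filter (fun ρ => q.1+q.2+2*n = ρ.1+ρ.2), c' ρ * (Polynomial.C (a q ρ) * X) := by
  intro c' q hq
  rw [Finsupp.finset_sum_apply]
  rw [Finset.sum_congr rfl (fun ρ hρ => by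
    rw [Finsupp.smul_apply, VAL hn σ a h s hs ih ρ hρ q, smul_eq_mul, mul_sub])]
  rw [Finset.sum_sub_distrib]
  refine congrArg₂ (· - ·) ?_ ?_
  · simp only [mul_ite, mul_one, mul_zero]
    rw [Finset.sum_ite_eq' (LamF n) q c', if_pos hq]
  · rw [Finset.sum_filter]
    exact Finset.sum_congr rfl (fun ρ hρ => by
      by_cases hcond : q.1+q.2+2*n = ρ.1+ρ.2
      · rw [if_pos hcond, if_pos ⟨hq, hcond⟩]
      · rw [if_neg hcond, if_neg (fun hh => hcond hh.2), mul_zero])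

lemma EVAL0 : ∀ (c' : ℤ × ℤ → Polynomial ℚ) (q : ℤ × ℤ), q ∉ LamF n →
    (∑ ρ ∈ LamF n, c' ρ • σ ρ) q = 0 := by
  intro c' q hq
  rw [Finsupp.finset_sum_apply]
  apply Finset.sum_eq_zero
  intro ρ hρ
  rw [Finsupp.smul_apply, VAL hn σ a h s hs ih ρ hρ q]
  rw [if_neg (fun e => hq (by rw [← e]; exact hρ)), if_neg (fun hh => hq hh.1), sub_zero, smul_zero]

lemma MAST : ∀ l ∈ LamF n, P n (σ l) = pieriFun n l -
    ∑ μ ∈ (LamF n).filter (fun μ => μ.1 + μ.2 + 2*n = l.1 + l.2),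
      (Polynomial.C (a μ l) * X) • pieriFun n μ := by
  intro l hl
  rw [SIG hn σ a h s hs ih l hl, map_sub, P_tau, map_sum]
  congr 1
  exact Finset.sum_congr rfl (fun μ _ => by rw [map_smul, P_tau])

include c hc hpos in
lemma ASC : ∀ k : ℕ, ∀ l ∈ LamF n, l.1 + l.2 = s + 1 + (k:ℤ) →
    ∀ q ∈ LamF n, q.1 + q.2 + 2*n = l.1 + l.2 → 0 ≤ a q l := by
  intro k
  induction k using Nat.strong_induction_on with
  | _ k IH =>
  intro l hl hdeg q0 hq0 hq0d
  have hlm := mem_LamF.mp hl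
  have hq0m := mem_LamF.mp hq0
  have hdF := degF hn l hl
  have hm : ((l.1 - 1, l.2 - 1) : ℤ × ℤ) ∈ LamF n := by
    rw [mem_LamF]; dsimp only; omega
  have hpm : pieriFun n (l.1 - 1, l.2 - 1) = tau l := by
    unfold pieriFun; dsimp only
    rw [if_neg (by omega), if_neg (by omega)]
    have e : (l.1 - 1 + 1, l.2 - 1 + 1) = l := by
      have e1 : l.1 - 1 + 1 = l.1 := by ring
      have e2 : l.2 - 1 + 1 = l.2 := by ring
      rw [e1, e2]
    rw [e]
  have hEm := hc (l.1 - 1, l.2 - 1) hm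
  rw [MAST hn σ a h s hs ih _ hm, hpm] at hEm
  simp only [show ((l.1-1, l.2-1) : ℤ×ℤ).1 = l.1-1 from rfl,
             show ((l.1-1, l.2-1) : ℤ×ℤ).2 = l.2-1 from rfl] at hEm
  -- hEm : tau l - ∑_{ν'} (C (a ν' m) * X) • pieriFun n ν' = ∑ ν ∈ LamF n, c m ν • σ ν
  have cδ : ∀ ρ ∈ LamF n, ρ.1 + ρ.2 = l.1 + l.2 →
      c (l.1-1, l.2-1) ρ = if l = ρ then 1 else 0 := by
    intro ρ hρ hρd
    have happ := DFunLike.congr_fun hEm ρ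
    rw [EVALmem hn σ a h s hs ih (c (l.1-1,l.2-1)) ρ hρ] at happ
    rw [Finsupp.sub_apply, Finsupp.finset_sum_apply, tau_apply] at happ
    have hz1 : ∀ ν' ∈ (LamF n).filter (fun μ => μ.1+μ.2+2*n = l.1-1+(l.2-1)),
        ((Polynomial.C (a ν' (l.1-1,l.2-1)) * X) • pieriFun n ν') ρ = 0 := by
      intro ν' hν'
      rw [Finset.mem_filter] at hν'
      have hν'd : ν'.1 + ν'.2 + 2*n = l.1 + l.2 - 2 := by have := hν'.2; omega
      rw [Finsupp.smul_apply, pevalS hn ν' hν'.1 (by omega) ρ]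
      have hno1 : ¬((ν'.1+1, ν'.2+1) = ρ) := fun e => by
        have e1 := fst_eq e; have e2 := snd_eq e; simp at e1 e2; omega
      have hno2 : ¬((ν'.1+ν'.2 = 2*n-4 ∨ ν'.1+ν'.2 = 2*n-3) ∧ (ν'.1+2, ν'.2) = ρ) := fun ee => by
        have e1 := fst_eq ee.2; have e2 := snd_eq ee.2; simp at e1 e2; omega
      rw [if_neg hno1, if_neg hno2, add_zero, smul_zero]
    rw [Finset.sum_congr rfl hz1, Finset.sum_const_zero, sub_zero] at happ
    have hz2 : (∑ ρ' ∈ (LamF n).filter (fun ρ' => ρ.1+ρ.2+2*n = ρ'.1+ρ'.2),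
        c (l.1-1,l.2-1) ρ' * (Polynomial.C (a ρ ρ') * X)) = 0 := by
      apply Finset.sum_eq_zero
      intro x hx
      rw [Finset.mem_filter] at hx
      have := degF hn x hx.1
      exact absurd hx.2 (by omega)
    rw [hz2, sub_zero] at happ
    exact happ.symm
  have happ0 := DFunLike.congr_fun hEm q0
  rw [EVALmem hn σ a h s hs ih (c (l.1-1,l.2-1)) q0 hq0] at happ0
  rw [Finsupp.sub_apply, Finsupp.finset_sum_apply, tau_apply] at happ0
  have hno0 : ¬(l = q0) := fun e => by
    have e1 := fst_eq e; have e2 := snd_eq e; omega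
  rw [if_neg hno0] at happ0
  have hS : (∑ ρ ∈ (LamF n).filter (fun ρ => q0.1+q0.2+2*n = ρ.1+ρ.2),
      c (l.1-1,l.2-1) ρ * (Polynomial.C (a q0 ρ) * X)) = Polynomial.C (a q0 l) * X := by
    have hcongr : ∀ ρ ∈ (LamF n).filter (fun ρ => q0.1+q0.2+2*n = ρ.1+ρ.2),
        c (l.1-1,l.2-1) ρ * (Polynomial.C (a q0 ρ) * X)
        = if ρ = l then Polynomial.C (a q0 ρ) * X else 0 := by
      intro ρ hρ
      rw [Finset.mem_filter] at hρ
      rw [cδ ρ hρ.1 (by omega)]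
      by_cases e : ρ = l
      · rw [if_pos e.symm, if_pos e, one_mul]
      · rw [if_neg (fun e' => e e'.symm), if_neg e, zero_mul]
    rw [Finset.sum_congr rfl hcongr,
        Finset.sum_ite_eq' _ l (fun ρ => Polynomial.C (a q0 ρ) * X),
        if_pos (Finset.mem_filter.mpr ⟨hl, by omega⟩)]
  rw [hS] at happ0
  have hterm : ∀ ν' ∈ (LamF n).filter (fun μ => μ.1+μ.2+2*n = l.1-1+(l.2-1)),
      ((Polynomial.C (a ν' (l.1-1,l.2-1)) * X) • pieriFun n ν') q0
      = (Polynomial.C (a ν' (l.1-1,l.2-1)) * X) *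
        ((if (ν'.1+1, ν'.2+1) = q0 then 1 else 0) +
         (if ((ν'.1+ν'.2 = 2*n-4 ∨ ν'.1+ν'.2 = 2*n-3) ∧ (ν'.1+2, ν'.2) = q0) then 1 else 0)) := by
    intro ν' hν'
    rw [Finset.mem_filter] at hν'
    rw [Finsupp.smul_apply, smul_eq_mul, pevalS hn ν' hν'.1 (by have := hν'.2; omega) q0]
  rw [Finset.sum_congr rfl hterm] at happ0
  have hco := congrArg (fun p : Polynomial ℚ => p.coeff 1) happ0
  simp only [coeff_sub, Polynomial.finset_sum_coeff, coeffCXW, coeff_zero,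
    coeff_C_mul, coeff_X_one, mul_one] at hco
  -- hco : 0 - ∑ ... = (c m q0).coeff 1 - a q0 l
  have hnn : 0 ≤ ∑ ν' ∈ (LamF n).filter (fun μ => μ.1+μ.2+2*n = l.1-1+(l.2-1)),
      a ν' (l.1-1,l.2-1) * ((if (ν'.1+1, ν'.2+1) = q0 then (1:ℚ) else 0) +
        (if ((ν'.1+ν'.2 = 2*n-4 ∨ ν'.1+ν'.2 = 2*n-3) ∧ (ν'.1+2, ν'.2) = q0) then 1 else 0)) := by
    apply Finset.sum_nonneg
    intro ν' hν'
    rw [Finset.mem_filter] at hν'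
    have hν'd : ν'.1 + ν'.2 + 2*n = l.1 + l.2 - 2 := by have := hν'.2; omega
    have ha : 0 ≤ a ν' (l.1-1, l.2-1) := by
      by_cases hk : (k:ℤ) ≤ 1
      · rw [aSmall hn σ a h s hs ih (l.1-1, l.2-1) hm (by dsimp only; omega) ν' hν'.1
          (by dsimp only; omega)]
      · obtain ⟨k', rfl⟩ : ∃ k', k = k' + 2 := ⟨k - 2, by omega⟩
        exact IH k' (by omega) (l.1-1, l.2-1) hm (by dsimp only; push_cast at hdeg ⊢; omega)
          ν' hν'.1 (by dsimp only; omega)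
    apply mul_nonneg ha
    have : (0:ℚ) ≤ (if (ν'.1+1, ν'.2+1) = q0 then (1:ℚ) else 0) := by split_ifs <;> norm_num
    have h2 : (0:ℚ) ≤ (if ((ν'.1+ν'.2 = 2*n-4 ∨ ν'.1+ν'.2 = 2*n-3) ∧ (ν'.1+2, ν'.2) = q0) then (1:ℚ) else 0) := by
      split_ifs <;> norm_num
    linarith
  have hq0pos := hpos (l.1-1, l.2-1) hm q0 hq0 1
  linarith [hco, hnn, hq0pos]

include c hc hpos in
lemma DESC : ∀ k : ℕ, ∀ l ∈ LamF n, s + 1 ≤ l.1 + l.2 → l.1 + l.2 + (k:ℤ) = 4*n-3 →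
    ∀ q ∈ LamF n, q.1 + q.2 + 2*n = l.1 + l.2 → a q l = 0 := by
  intro k
  induction k using Nat.strong_induction_on with
  | _ k IH =>
  intro l hl hsl hkl q0 hq0 hq0d
  have hlm := mem_LamF.mp hl
  have hq0m := mem_LamF.mp hq0
  have hdF := degF hn l hl
  have hASC : ∀ q ∈ LamF n, q.1+q.2+2*n = l.1+l.2 → 0 ≤ a q l := by
    intro q hq hqd
    obtain ⟨k', hk'⟩ : ∃ k' : ℕ, l.1+l.2 = s+1+(k':ℤ) := ⟨(l.1+l.2-(s+1)).toNat, by omega⟩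
    exact ASC hn σ a h c hc hpos s hs ih k' l hl hk' q hq hqd
  have hq02 : 0 ≤ q0.2 := by omega
  have hEl := hc l hl
  rw [MAST hn σ a h s hs ih l hl] at hEl
  have happ := DFunLike.congr_fun hEl (q0.1+1, q0.2+1)
  rw [Finsupp.sub_apply, Finsupp.finset_sum_apply] at happ
  rw [pevalTop0 hn l hl (by omega) (q0.1+1, q0.2+1) (by dsimp only; omega)
      (by dsimp only; omega)] at happ
  have hterm : ∀ μ ∈ (LamF n).filter (fun μ => μ.1 + μ.2 + 2*n = l.1 + l.2),
      ((Polynomial.C (a μ l) * X) • pieriFun n μ) (q0.1+1, q0.2+1)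
      = (Polynomial.C (a μ l) * X) *
        ((if (μ.1+1, μ.2+1) = ((q0.1+1, q0.2+1) : ℤ×ℤ) then 1 else 0) +
         (if ((μ.1+μ.2 = 2*n-4 ∨ μ.1+μ.2 = 2*n-3) ∧ (μ.1+2, μ.2) = ((q0.1+1, q0.2+1) : ℤ×ℤ)) then 1 else 0)) := by
    intro μ hμ
    rw [Finset.mem_filter] at hμ
    rw [Finsupp.smul_apply, smul_eq_mul, pevalS hn μ hμ.1 (by have := hμ.2; omega) (q0.1+1, q0.2+1)]
  rw [Finset.sum_congr rfl hterm] at happ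
  have hSle : (∑ μ ∈ (LamF n).filter (fun μ => μ.1 + μ.2 + 2*n = l.1 + l.2),
      a μ l * ((if (μ.1+1, μ.2+1) = ((q0.1+1, q0.2+1) : ℤ×ℤ) then (1:ℚ) else 0) +
        (if ((μ.1+μ.2 = 2*n-4 ∨ μ.1+μ.2 = 2*n-3) ∧ (μ.1+2, μ.2) = ((q0.1+1, q0.2+1) : ℤ×ℤ)) then 1 else 0))) ≤ 0 := by
    by_cases hpF : ((q0.1+1, q0.2+1) : ℤ×ℤ) ∈ LamF n
    · rw [EVALmem hn σ a h s hs ih (c l) _ hpF] at happ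
      simp only [show ((q0.1+1, q0.2+1) : ℤ×ℤ).1 = q0.1+1 from rfl,
                 show ((q0.1+1, q0.2+1) : ℤ×ℤ).2 = q0.2+1 from rfl] at happ
      have hz : (∑ ρ ∈ (LamF n).filter (fun ρ => q0.1+1+(q0.2+1)+2*n = ρ.1+ρ.2),
          c l ρ * (Polynomial.C (a (q0.1+1, q0.2+1) ρ) * X)) = 0 := by
        apply Finset.sum_eq_zero
        intro ρ hρ
        rw [Finset.mem_filter] at hρ
        have hρd : ρ.1+ρ.2 = l.1+l.2+2 := by have := hρ.2; omega
        have hρF := degF hn ρ hρ.1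
        obtain ⟨k', rfl⟩ : ∃ k', k = k'+2 := ⟨k-2, by omega⟩
        rw [IH k' (by omega) ρ hρ.1 (by omega) (by push_cast at hkl ⊢; omega)
            (q0.1+1, q0.2+1) hpF (by dsimp only; omega)]
        simp
      rw [hz, sub_zero] at happ
      have hco := congrArg (fun w : Polynomial ℚ => w.coeff 1) happ
      simp only [coeff_sub, Polynomial.finset_sum_coeff, coeffCXW, coeff_zero] at hco
      have hppos := hpos l hl (q0.1+1, q0.2+1) hpF 1
      linarith [hco, hppos]
    · rw [EVAL0 hn σ a h s hs ih (c l) _ hpF] at happ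
      have hco := congrArg (fun w : Polynomial ℚ => w.coeff 1) happ
      simp only [coeff_sub, Polynomial.finset_sum_coeff, coeffCXW, coeff_zero] at hco
      linarith [hco]
  have hq0in : q0 ∈ (LamF n).filter (fun μ => μ.1 + μ.2 + 2*n = l.1 + l.2) :=
    Finset.mem_filter.mpr ⟨hq0, hq0d⟩
  have hnn : ∀ μ ∈ (LamF n).filter (fun μ => μ.1 + μ.2 + 2*n = l.1 + l.2),
      0 ≤ a μ l * ((if (μ.1+1, μ.2+1) = ((q0.1+1, q0.2+1) : ℤ×ℤ) then (1:ℚ) else 0) +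
        (if ((μ.1+μ.2 = 2*n-4 ∨ μ.1+μ.2 = 2*n-3) ∧ (μ.1+2, μ.2) = ((q0.1+1, q0.2+1) : ℤ×ℤ)) then 1 else 0)) := by
    intro μ hμ
    rw [Finset.mem_filter] at hμ
    apply mul_nonneg (hASC μ hμ.1 hμ.2)
    have h1 : (0:ℚ) ≤ (if (μ.1+1, μ.2+1) = ((q0.1+1, q0.2+1) : ℤ×ℤ) then (1:ℚ) else 0) := by
      split_ifs <;> norm_num
    have h2 : (0:ℚ) ≤ (if ((μ.1+μ.2 = 2*n-4 ∨ μ.1+μ.2 = 2*n-3) ∧ (μ.1+2, μ.2) = ((q0.1+1, q0.2+1) : ℤ×ℤ)) then (1:ℚ) else 0) := by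
      split_ifs <;> norm_num
    linarith
  have hle := Finset.single_le_sum hnn hq0in
  have hWq0 : a q0 l * ((if (q0.1+1, q0.2+1) = ((q0.1+1, q0.2+1) : ℤ×ℤ) then (1:ℚ) else 0) +
      (if ((q0.1+q0.2 = 2*n-4 ∨ q0.1+q0.2 = 2*n-3) ∧ (q0.1+2, q0.2) = ((q0.1+1, q0.2+1) : ℤ×ℤ)) then 1 else 0)) = a q0 l := by
    have hno : ¬((q0.1+q0.2 = 2*n-4 ∨ q0.1+q0.2 = 2*n-3) ∧ (q0.1+2, q0.2) = ((q0.1+1, q0.2+1) : ℤ×ℤ)) := by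
      intro ee
      have := snd_eq ee.2
      simp at this
    rw [if_pos rfl, if_neg hno, add_zero, mul_one]
  rw [hWq0] at hle
  have := hASC q0 hq0 hq0d
  linarith [hle, hSle, this]


end

theorem stmt19 (n : ℤ) (hn : 3 ≤ n) (σ : ℤ × ℤ → M) (a : ℤ × ℤ → ℤ × ℤ → ℚ)
    (h : ∀ l ∈ LamF n, tau l = σ l +
      ∑ μ ∈ (LamF n).filter (fun μ => μ.1 + μ.2 + 2*n = l.1 + l.2),
        (Polynomial.C (a μ l) * X) • σ μ)
    (c : ℤ × ℤ → ℤ × ℤ → Polynomial ℚ)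
    (hc : ∀ μ ∈ LamF n, P n (σ μ) = ∑ ν ∈ LamF n, (c μ ν) • σ ν)
    (hpos : ∀ μ ∈ LamF n, ∀ ν ∈ LamF n, ∀ k : ℕ, 0 ≤ (c μ ν).coeff k)
    (hσ : LinearIndependent (Polynomial ℚ) (fun p : (LamF n) => σ p))
    (s : ℤ) (hs : 2*n ≤ s)
    (ih : ∀ μ ∈ LamF n, μ.1 + μ.2 ≤ s → tau μ = σ μ)
    : ∀ l ∈ LamF n, l.1 + l.2 = s + 1 →
        (∀ μ ∈ LamF n, μ.1 + μ.2 + 2*n = l.1 + l.2 → a μ l = 0) ∧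
        tau l = σ l := by
  intro l hl hdeg
  have hdF := degF hn l hl
  have hlm := mem_LamF.mp hl
  obtain ⟨k, hk⟩ : ∃ k : ℕ, l.1 + l.2 + (k:ℤ) = 4*n-3 := ⟨(4*n-3-(l.1+l.2)).toNat, by omega⟩
  have part1 : ∀ μ ∈ LamF n, μ.1 + μ.2 + 2*n = l.1 + l.2 → a μ l = 0 :=
    fun μ hμ hdμ => DESC hn σ a h c hc hpos s hs ih k l hl (by omega) hk μ hμ hdμ
  refine ⟨part1, ?_⟩
  rw [SIG hn σ a h s hs ih l hl]
  have hz : (∑ μ ∈ (LamF n).filter (fun μ => μ.1 + μ.2 + 2*n = l.1 + l.2),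
      (Polynomial.C (a μ l) * X) • tau μ) = 0 := by
    apply Finset.sum_eq_zero
    intro μ hμ
    rw [Finset.mem_filter] at hμ
    rw [part1 μ hμ.1 hμ.2]
    simp
  rw [hz, sub_zero]
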